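/- (Trace bound for sparse matrices.) Let M be a p×p real symmetric matrix, let m = max_{i,j} |M(i,j)|, and suppose that for some β ∈ [0,1] and f : ℕ → ℝ₊ one has trace(A(M)^k) ≤ f(k) p^{β(k−1)+1} for every even integer k ≥ 2, where A(M) is the adjacency matrix of M. Then for every even integer k ≥ 2: ‖M‖₂ ≤ |trace(M^k)|^{1/k} ≤ m · p^{β(1−1/k)+1/k} · f(k)^{1/k}. -/

import Mathlib

/-!
For symmetric `M`, `‖M‖₂` is the largest `|λᵢ|` and `trace (M ^ k) = ∑ λᵢ ^ k`, which for even `k`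
dominates every `λᵢ ^ k`. Entrywise `|M| ≤ m • A(M)`, so `|(M ^ k) i j| ≤ m ^ k (A(M) ^ k) i j`
(expand both powers as sums over walks), and taking traces reduces the upper bound to the
sparsity hypothesis.
-/

open MeasureTheory ProbabilityTheory Matrix Filter Finset

noncomputable section

open scoped Classical

/-- Spectral (operator) norm of a real `p × p` matrix: its largest singular value,
realized as the operator norm of the associated linear map on Euclidean space. -/
def specNorm {p : ℕ} (M : Matrix (Fin p) (Fin p) ℝ) : ℝ :=
  ‖Matrix.toEuclideanCLM (𝕜 := ℝ) M‖

/-- Adjacency matrix of a matrix: entry `1` where the matrix is nonzero, `0` elsewhere. -/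
def adjMat {p : ℕ} (M : Matrix (Fin p) (Fin p) ℝ) : Matrix (Fin p) (Fin p) ℝ :=
  Matrix.of fun i j => if M i j ≠ 0 then (1 : ℝ) else 0

/-- β-sparsity of a sequence of matrices: the number of closed walks of (even) length `k`
on the associated adjacency graphs, `φ_p(k) = trace (A_p ^ k)`, is at most
`f(k) * p^(β(k-1)+1)` with `f` independent of `p`. -/
def IsBetaSparse (pdim : ℕ → ℕ) (S : ∀ n, Matrix (Fin (pdim n)) (Fin (pdim n)) ℝ)
    (β : ℝ) : Prop :=
  ∃ f : ℕ → ℝ, (∀ k, 0 ≤ f k) ∧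
    ∀ n, ∀ k : ℕ, Even k → k ≠ 0 →
      Matrix.trace (adjMat (S n) ^ k) ≤ f k * (pdim n : ℝ) ^ (β * ((k : ℝ) - 1) + 1)

/-- Hard thresholding of the entries of a matrix at level `t`. -/
def hardThresh {p : ℕ} (t : ℝ) (M : Matrix (Fin p) (Fin p) ℝ) : Matrix (Fin p) (Fin p) ℝ :=
  Matrix.of fun i j => if t ≤ |M i j| then M i j else 0

/-- `p ≍ n` : `p = p(n) → ∞` with `p = O(n)` and `n = O(p)`. -/
def PDimAsymp (pdim : ℕ → ℕ) : Prop :=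
  Tendsto pdim atTop atTop ∧
    ∃ C : ℝ, 0 < C ∧ ∀ n : ℕ, (pdim n : ℝ) ≤ C * n ∧ (n : ℝ) ≤ C * pdim n

/-- The (uncentered) sample covariance matrix `S_p = (1/n) ∑ X_i X_iᵀ`. -/
def gramMat {Ω : Type*} (pdim : ℕ → ℕ) (X : ∀ n : ℕ, Fin n → Fin (pdim n) → Ω → ℝ)
    (n : ℕ) (ω : Ω) : Matrix (Fin (pdim n)) (Fin (pdim n)) ℝ :=
  Matrix.of fun a b => (1 / (n : ℝ)) * ∑ i : Fin n, X n i a ω * X n i b ω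

/-- The rows of the `n × p(n)` data matrices are i.i.d.: measurable entries,
independent rows, identically distributed rows. -/
def IIDRows {Ω : Type*} [MeasurableSpace Ω] (μ : Measure Ω) (pdim : ℕ → ℕ)
    (X : ∀ n : ℕ, Fin n → Fin (pdim n) → Ω → ℝ) : Prop :=
  (∀ n (i : Fin n) (j : Fin (pdim n)), Measurable (X n i j)) ∧
  (∀ n : ℕ, iIndepFun
      (fun i ω => fun j => X n i j ω) μ) ∧
  (∀ n : ℕ, ∀ i i' : Fin n,
      IdentDistrib (fun ω => fun j => X n i j ω) (fun ω => fun j => X n i' j ω) μ μ)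

end

namespace Matrix

variable {n : Type*} [Fintype n] [DecidableEq n]

theorem abs_pow_apply_le_of_abs_apply_le {R : Type*} [CommRing R] [LinearOrder R]
    [IsStrictOrderedRing R] {A B : Matrix n n R} (hAB : ∀ i j, |A i j| ≤ B i j) (k : ℕ) (i j : n) :
    |(A ^ k) i j| ≤ (B ^ k) i j := by
  induction k generalizing j with
  | zero => simp only [pow_zero, one_apply]; split_ifs <;> simp
  | succ k ih =>
    rw [pow_succ, pow_succ, mul_apply, mul_apply]
    refine (abs_sum_le_sum_abs _ _).trans (sum_le_sum fun l _ => ?_)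
    rw [abs_mul]
    exact mul_le_mul (ih l) (hAB l j) (abs_nonneg _) ((abs_nonneg _).trans (ih l))

theorem abs_trace_pow_le_of_abs_apply_le {R : Type*} [CommRing R] [LinearOrder R]
    [IsStrictOrderedRing R] {A B : Matrix n n R} (hAB : ∀ i j, |A i j| ≤ B i j) (k : ℕ) :
    |(A ^ k).trace| ≤ (B ^ k).trace :=
  (abs_sum_le_sum_abs _ _).trans
    (sum_le_sum fun i _ => abs_pow_apply_le_of_abs_apply_le hAB k i i)

namespace IsHermitian

variable {𝕜 : Type*} [RCLike 𝕜] {A : Matrix n n 𝕜}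

theorem trace_pow_eq_sum_eigenvalues_pow (hA : A.IsHermitian) (k : ℕ) :
    (A ^ k).trace = ∑ i, (hA.eigenvalues i : 𝕜) ^ k := by
  conv_lhs => rw [hA.spectral_theorem, ← map_pow, Unitary.conjStarAlgAut_apply, trace_mul_cycle,
    Unitary.coe_star_mul_self, one_mul, diagonal_pow, trace_diagonal]
  simp

open scoped Matrix.Norms.L2Operator in
theorem l2_opNorm_eq_norm_eigenvalues (hA : A.IsHermitian) : ‖A‖ = ‖hA.eigenvalues‖ := by
  conv_lhs => rw [hA.spectral_theorem, Unitary.conjStarAlgAut_apply, ← Unitary.coe_star,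
    CStarRing.norm_mul_coe_unitary, CStarRing.norm_coe_unitary_mul, l2_opNorm_diagonal]
  simp [Pi.norm_def]

end IsHermitian

end Matrix

theorem norm_le_sum_pow_rpow_inv {ι : Type*} [Fintype ι] (x : ι → ℝ) {k : ℕ} (hk : Even k)
    (hk0 : k ≠ 0) : ‖x‖ ≤ (∑ i, x i ^ k) ^ (k⁻¹ : ℝ) := by
  have hsum : 0 ≤ ∑ i, x i ^ k := sum_nonneg fun i _ => hk.pow_nonneg (x i)
  refine (pi_norm_le_iff_of_nonneg (Real.rpow_nonneg hsum _)).2 fun i => ?_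
  rw [Real.norm_eq_abs, ← Real.pow_rpow_inv_natCast (abs_nonneg (x i)) hk0, hk.pow_abs]
  exact Real.rpow_le_rpow (hk.pow_nonneg _)
    (single_le_sum (fun j _ => hk.pow_nonneg (x j)) (mem_univ i)) (by positivity)

theorem abs_apply_le_smul_adjMat {p : ℕ} {M : Matrix (Fin p) (Fin p) ℝ} {m : ℝ}
    (hm : ∀ i j, |M i j| ≤ m) (i j : Fin p) : |M i j| ≤ (m • adjMat M) i j := by
  by_cases h : M i j = 0 <;> simp [adjMat, h, hm i j]

theorem abs_trace_pow_le_pow_mul_trace_adjMat_pow {p : ℕ} {M : Matrix (Fin p) (Fin p) ℝ} {m : ℝ}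
    (hm : ∀ i j, |M i j| ≤ m) (k : ℕ) :
    |(M ^ k).trace| ≤ m ^ k * (adjMat M ^ k).trace := by
  simpa only [smul_pow, trace_smul, smul_eq_mul] using
    abs_trace_pow_le_of_abs_apply_le (abs_apply_le_smul_adjMat hm) k

open scoped Matrix.Norms.L2Operator in
theorem specNorm_eq_norm_eigenvalues {p : ℕ} {M : Matrix (Fin p) (Fin p) ℝ} (hM : M.IsHermitian) :
    specNorm M = ‖hM.eigenvalues‖ :=
  hM.l2_opNorm_eq_norm_eigenvalues

theorem statement10_general
    {p : ℕ} (M : Matrix (Fin p) (Fin p) ℝ) (hMsymm : M.IsSymm)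
    (m : ℝ) (hm0 : 0 ≤ m) (hm : ∀ i j, |M i j| ≤ m)
    (β : ℝ)
    (f : ℕ → ℝ) (hf : ∀ k, 0 ≤ f k)
    (hsp : ∀ k : ℕ, Even k → 2 ≤ k →
      Matrix.trace (adjMat M ^ k) ≤ f k * (p : ℝ) ^ (β * ((k : ℝ) - 1) + 1)) :
    ∀ k : ℕ, Even k → 2 ≤ k →
      specNorm M ≤ |Matrix.trace (M ^ k)| ^ ((k : ℝ)⁻¹) ∧
      |Matrix.trace (M ^ k)| ^ ((k : ℝ)⁻¹) ≤
        m * (p : ℝ) ^ (β * (1 - (k : ℝ)⁻¹) + (k : ℝ)⁻¹) * f k ^ ((k : ℝ)⁻¹) := by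
  intro k hk hk2
  have hk0 : k ≠ 0 := by omega
  have hM : M.IsHermitian := isHermitian_iff_isSymm.mpr hMsymm
  have htrace : |(M ^ k).trace| = ∑ i, hM.eigenvalues i ^ k := by
    rw [hM.trace_pow_eq_sum_eigenvalues_pow k]
    exact abs_of_nonneg (sum_nonneg fun i _ => hk.pow_nonneg _)
  refine ⟨?_, ?_⟩
  · rw [specNorm_eq_norm_eigenvalues hM, htrace]
    exact norm_le_sum_pow_rpow_inv _ hk hk0
  · have hbound : |(M ^ k).trace| ≤ m ^ k * (f k * (p : ℝ) ^ (β * ((k : ℝ) - 1) + 1)) :=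
      (abs_trace_pow_le_pow_mul_trace_adjMat_pow hm k).trans
        (mul_le_mul_of_nonneg_left (hsp k hk hk2) (pow_nonneg hm0 k))
    have hexp : (β * ((k : ℝ) - 1) + 1) * (k : ℝ)⁻¹ = β * (1 - (k : ℝ)⁻¹) + (k : ℝ)⁻¹ := by
      field_simp
    calc |(M ^ k).trace| ^ (k⁻¹ : ℝ)
        ≤ (m ^ k * (f k * (p : ℝ) ^ (β * ((k : ℝ) - 1) + 1))) ^ (k⁻¹ : ℝ) := by gcongr
      _ = m * (p : ℝ) ^ (β * (1 - (k : ℝ)⁻¹) + (k : ℝ)⁻¹) * f k ^ ((k : ℝ)⁻¹) := by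
        rw [Real.mul_rpow (by positivity) (mul_nonneg (hf k) (by positivity)),
          Real.mul_rpow (hf k) (by positivity), Real.pow_rpow_inv_natCast hm0 hk0,
          ← Real.rpow_mul p.cast_nonneg, hexp]
        ring

/-- **Lemma A.1** (El Karoui): trace bound for β-sparse symmetric matrices. For a
symmetric `M` with entries bounded by `m` and `trace(A(M)^k) ≤ f(k) p^{β(k-1)+1}` for
even `k`, one has `‖M‖₂ ≤ |trace(M^k)|^{1/k} ≤ m p^{β(1-1/k)+1/k} f(k)^{1/k}`. -/
theorem statement10
    {p : ℕ} (M : Matrix (Fin p) (Fin p) ℝ) (hMsymm : M.IsSymm)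
    (m : ℝ) (hm0 : 0 ≤ m) (hm : ∀ i j, |M i j| ≤ m)
    (β : ℝ) (hβ0 : 0 ≤ β) (hβ1 : β ≤ 1)
    (f : ℕ → ℝ) (hf : ∀ k, 0 ≤ f k)
    (hsp : ∀ k : ℕ, Even k → 2 ≤ k →
      Matrix.trace (adjMat M ^ k) ≤ f k * (p : ℝ) ^ (β * ((k : ℝ) - 1) + 1)) :
    ∀ k : ℕ, Even k → 2 ≤ k →
      specNorm M ≤ |Matrix.trace (M ^ k)| ^ ((k : ℝ)⁻¹) ∧
      |Matrix.trace (M ^ k)| ^ ((k : ℝ)⁻¹) ≤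
        m * (p : ℝ) ^ (β * (1 - (k : ℝ)⁻¹) + (k : ℝ)⁻¹) * f k ^ ((k : ℝ)⁻¹) :=
  statement10_general M hMsymm m hm0 hm β f hf hsp
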